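/- arXiv:1012.1010 — 4 statements merged into one kernel-verified Lean document; each statement's English description precedes it below -/
import Mathlib

section
/- Let T be a type, P and Q monads on [T,Set], ρ : P → Q a morphism of monads, M a Q-module with codomain [T,Set], and u ∈ T. Then the P-modules ρ*(M^u) and (ρ*M)^u have the same object map V ↦ M(V^{*u}), and the family of identity morphisms is an isomorphism of P-modules ρ*(M^u) ≅ (ρ*M)^u. -/
set_option autoImplicit false

universe u

/-- A monad (Kleisli triple) on the category `[T,Set]` of `T`-indexed families of types. -/
structure FMonad (T : Type u) where
  obj : (T → Type u) → T → Type u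
  eta : ∀ {V : T → Type u} (t : T), V t → obj V t
  subst : ∀ {V W : T → Type u}, (∀ t, V t → obj W t) → ∀ t, obj V t → obj W t
  eta_subst : ∀ {V W : T → Type u} (f : ∀ t, V t → obj W t) (t : T) (v : V t),
    subst f t (eta t v) = f t v
  subst_eta : ∀ {V : T → Type u} (t : T) (x : obj V t),
    subst (fun t v => eta t v) t x = x
  subst_subst : ∀ {V W X : T → Type u} (f : ∀ t, V t → obj W t)
    (g : ∀ t, W t → obj X t) (t : T) (x : obj V t),
    subst g t (subst f t x) = subst (fun t v => subst g t (f t v)) t x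

/-- A module over the monad `P` with codomain `[T,Set]`. -/
structure FModF {T : Type u} (P : FMonad T) where
  obj : (T → Type u) → T → Type u
  subst : ∀ {V W : T → Type u}, (∀ t, V t → P.obj W t) → ∀ t, obj V t → obj W t
  subst_eta : ∀ {V : T → Type u} (t : T) (x : obj V t),
    subst (fun t v => P.eta t v) t x = x
  subst_subst : ∀ {V W X : T → Type u} (f : ∀ t, V t → P.obj W t)
    (g : ∀ t, W t → P.obj X t) (t : T) (x : obj V t),
    subst g t (subst f t x) = subst (fun t v => P.subst g t (f t v)) t x

/-- A module over the monad `P` with codomain `Set` (the category of types). -/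
structure FModS {T : Type u} (P : FMonad T) where
  obj : (T → Type u) → Type u
  subst : ∀ {V W : T → Type u}, (∀ t, V t → P.obj W t) → obj V → obj W
  subst_eta : ∀ {V : T → Type u} (x : obj V),
    subst (fun t v => P.eta t v) x = x
  subst_subst : ∀ {V W X : T → Type u} (f : ∀ t, V t → P.obj W t)
    (g : ∀ t, W t → P.obj X t) (x : obj V),
    subst g (subst f x) = subst (fun t v => P.subst g t (f t v)) x

/-- Morphism of `P`-modules with codomain `[T,Set]`. -/
structure FModFHom {T : Type u} {P : FMonad T} (M N : FModF P) where
  app : ∀ (V : T → Type u) (t : T), M.obj V t → N.obj V t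
  natural : ∀ {V W : T → Type u} (f : ∀ t, V t → P.obj W t) (t : T) (x : M.obj V t),
    app W t (M.subst f t x) = N.subst f t (app V t x)

/-- Morphism of `P`-modules with codomain `Set`. -/
structure FModSHom {T : Type u} {P : FMonad T} (M N : FModS P) where
  app : ∀ (V : T → Type u), M.obj V → N.obj V
  natural : ∀ {V W : T → Type u} (f : ∀ t, V t → P.obj W t) (x : M.obj V),
    app W (M.subst f x) = N.subst f (app V x)

/-- Morphism of monads on `[T,Set]`. -/
structure FMonadHom {T : Type u} (P Q : FMonad T) where
  app : ∀ (V : T → Type u) (t : T), P.obj V t → Q.obj V t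
  app_eta : ∀ {V : T → Type u} (t : T) (v : V t), app V t (P.eta t v) = Q.eta t v
  app_subst : ∀ {V W : T → Type u} (f : ∀ t, V t → P.obj W t) (t : T) (x : P.obj V t),
    app W t (P.subst f t x) = Q.subst (fun t v => app W t (f t v)) t (app V t x)

/-- `Fresh a V` is the family `V` enriched with one fresh element of index `a`,
i.e. `V^{*a}`. -/
inductive Fresh {T : Type u} (a : T) (V : T → Type u) : T → Type u where
  | old : ∀ {t : T}, V t → Fresh a V t
  | new : Fresh a V a

/-- The shifted map `f^a : V^{*a} → P (W^{*a})`. -/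
def fshift {T : Type u} (P : FMonad T) (a : T) {V W : T → Type u}
    (f : ∀ t, V t → P.obj W t) : ∀ t, Fresh a V t → P.obj (Fresh a W) t
  | _, .old v => P.subst (fun t w => P.eta t (Fresh.old w)) _ (f _ v)
  | _, .new => P.eta a Fresh.new

theorem fshift_eta {T : Type u} (P : FMonad T) (a : T) (V : T → Type u) :
    fshift P a (fun t (v : V t) => P.eta t v) = fun t v => P.eta t v := by
  funext t x
  cases x with
  | old v => simp [fshift, P.eta_subst]
  | new => rfl

theorem fshift_comp {T : Type u} (P : FMonad T) (a : T) {V W X : T → Type u}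
    (f : ∀ t, V t → P.obj W t) (g : ∀ t, W t → P.obj X t) (t : T) (x : Fresh a V t) :
    P.subst (fshift P a g) t (fshift P a f t x)
      = fshift P a (fun t v => P.subst g t (f t v)) t x := by
  cases x with
  | new => simp [fshift, P.eta_subst]
  | old v =>
    simp only [fshift]
    rw [P.subst_subst, P.subst_subst]
    have h : (fun (t : T) (w : W t) =>
        P.subst (fshift P a g) t (P.eta t (Fresh.old w)))
        = fun (t : T) (w : W t) =>
            P.subst (fun t w => P.eta t (Fresh.old w)) t (g t w) := by
      funext t w
      rw [P.eta_subst]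
      rfl
    rw [h]

/-- The derived module `M^a`. -/
def derMod {T : Type u} {P : FMonad T} (a : T) (M : FModF P) : FModF P where
  obj V := M.obj (Fresh a V)
  subst f := M.subst (fshift P a f)
  subst_eta := by
    intro V t x
    show M.subst (fshift P a fun t v => P.eta t v) t x = x
    rw [fshift_eta]
    exact M.subst_eta t x
  subst_subst := by
    intro V W X f g t x
    show M.subst (fshift P a g) t (M.subst (fshift P a f) t x)
      = M.subst (fshift P a fun t v => P.subst g t (f t v)) t x
    rw [M.subst_subst]
    have h : (fun (t : T) (y : Fresh a V t) =>
        P.subst (fshift P a g) t (fshift P a f t y))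
        = fshift P a (fun t v => P.subst g t (f t v)) := by
      funext t y
      exact fshift_comp P a f g t y
    rw [h]

/-- The fibre module `M_a`. -/
def fibMod {T : Type u} {P : FMonad T} (a : T) (M : FModF P) : FModS P where
  obj V := M.obj V a
  subst f x := M.subst f a x
  subst_eta x := M.subst_eta a x
  subst_subst f g x := M.subst_subst f g a x

/-- The pullback of a `Q`-module (codomain `[T,Set]`) along a monad morphism. -/
def pbModF {T : Type u} {P Q : FMonad T} (h : FMonadHom P Q) (M : FModF Q) :
    FModF P where
  obj := M.obj
  subst f := M.subst (fun t v => h.app _ t (f t v))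
  subst_eta := by
    intro V t x
    show M.subst (fun t v => h.app V t (P.eta t v)) t x = x
    have e : (fun (t : T) (v : V t) => h.app V t (P.eta t v))
        = fun t v => Q.eta t v := by
      funext t v; exact h.app_eta t v
    rw [e]
    exact M.subst_eta t x
  subst_subst := by
    intro V W X f g t x
    show M.subst (fun t v => h.app X t (g t v)) t
        (M.subst (fun t v => h.app W t (f t v)) t x)
      = M.subst (fun t v => h.app X t (P.subst g t (f t v))) t x
    rw [M.subst_subst]
    have e : (fun (t : T) (v : V t) =>
        Q.subst (fun t v => h.app X t (g t v)) t (h.app W t (f t v)))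
        = fun (t : T) (v : V t) => h.app X t (P.subst g t (f t v)) := by
      funext t v
      rw [h.app_subst]
    rw [e]

/-- The pullback of a `Q`-module (codomain `Set`) along a monad morphism. -/
def pbModS {T : Type u} {P Q : FMonad T} (h : FMonadHom P Q) (M : FModS Q) :
    FModS P where
  obj := M.obj
  subst f x := M.subst (fun t v => h.app _ t (f t v)) x
  subst_eta := by
    intro V x
    show M.subst (fun t v => h.app V t (P.eta t v)) x = x
    have e : (fun (t : T) (v : V t) => h.app V t (P.eta t v))
        = fun t v => Q.eta t v := by
      funext t v; exact h.app_eta t v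
    rw [e]
    exact M.subst_eta x
  subst_subst := by
    intro V W X f g x
    show M.subst (fun t v => h.app X t (g t v))
        (M.subst (fun t v => h.app W t (f t v)) x)
      = M.subst (fun t v => h.app X t (P.subst g t (f t v))) x
    rw [M.subst_subst]
    have e : (fun (t : T) (v : V t) =>
        Q.subst (fun t v => h.app X t (g t v)) t (h.app W t (f t v)))
        = fun (t : T) (v : V t) => h.app X t (P.subst g t (f t v)) := by
      funext t v
      rw [h.app_subst]
    rw [e]

/-- Pullback commutes with derivation: for a monad morphism `ρ : P → Q`,
a `Q`-module `M` with codomain `[T,Set]` and `u ∈ T`, the `P`-modules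
`ρ*(M^u)` and `(ρ*M)^u` have the same object map `V ↦ M(V^{*u})`, and the
family of identity maps is an isomorphism of `P`-modules between them. -/
theorem pullback_commutes_with_derivation (T : Type u) (P Q : FMonad T)
    (ρ : FMonadHom P Q) (M : FModF Q) (a : T) :
    -- the two modules have the same object map
    ((pbModF ρ (derMod a M)).obj = (derMod a (pbModF ρ M)).obj) ∧
    -- and the family of identity maps is an isomorphism of `P`-modules
    ∃ (e : FModFHom (pbModF ρ (derMod a M)) (derMod a (pbModF ρ M)))
      (e' : FModFHom (derMod a (pbModF ρ M)) (pbModF ρ (derMod a M))),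
      (∀ (V : T → Type u) (t : T) (x : M.obj (Fresh a V) t), e.app V t x = x) ∧
      (∀ (V : T → Type u) (t : T) (x : M.obj (Fresh a V) t), e'.app V t x = x) := by
  have key : ∀ {V W : T → Type u} (f : ∀ t, V t → P.obj W t),
      (fun t (v : Fresh a V t) => ρ.app (Fresh a W) t (fshift P a f t v))
        = fshift Q a (fun t v => ρ.app W t (f t v)) := by
    intro V W f
    funext t v
    cases v with
    | new => simp [fshift, ρ.app_eta]
    | old v =>
      simp only [fshift]
      rw [ρ.app_subst]
      congr 1
      funext t w
      rw [ρ.app_eta]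
  have hsub : ∀ {V W : T → Type u} (f : ∀ t, V t → P.obj W t) (t : T)
      (x : M.obj (Fresh a V) t),
      (pbModF ρ (derMod a M)).subst f t x = (derMod a (pbModF ρ M)).subst f t x := by
    intro V W f t x
    show M.subst (fshift Q a (fun t v => ρ.app W t (f t v))) t x
      = M.subst (fun t v => ρ.app _ t (fshift P a f t v)) t x
    rw [key]
  refine ⟨rfl, ⟨fun V t x => x, ?_⟩, ⟨fun V t x => x, ?_⟩,
    fun _ _ _ => rfl, fun _ _ _ => rfl⟩
  · intro V W f t x; exact hsub f t x
  · intro V W f t x; exact (hsub f t x).symm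
end

section
/- Let T be a type, P a monad on [T,Set], and u ∈ T. For every P-module M with codomain [T,Set], the derived data M^u (object map V ↦ M(V^{*u}), substitution ς^{M^u}(f) := ς^M(f^u) using the shifted map f^u) satisfies the module laws, so M^u is a P-module with codomain [T,Set]; and for every P-module morphism ρ : M → N, the family V ↦ ρ_{V^{*u}} is a P-module morphism M^u → N^u. This assignment is functorial, i.e. derivation with respect to u is an endofunctor on Mod^P_{[T,Set]}. -/
set_option autoImplicit false

universe u

/-- Identity module morphism (codomain `[T,Set]`). -/
def FModFHom.id' {T : Type u} {P : FMonad T} (M : FModF P) : FModFHom M M where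
  app _ _ x := x
  natural _ _ _ := rfl

/-- Composition of module morphisms (codomain `[T,Set]`). -/
def FModFHom.comp {T : Type u} {P : FMonad T} {M N L : FModF P}
    (ρ : FModFHom M N) (τ : FModFHom N L) : FModFHom M L where
  app V t x := τ.app V t (ρ.app V t x)
  natural := by
    intro V W f t x
    show τ.app W t (ρ.app W t (M.subst f t x)) = _
    rw [ρ.natural, τ.natural]

/-- The derivation of a module morphism: the family `V ↦ ρ_{V^{*u}}`. -/
def derHom {T : Type u} {P : FMonad T} (a : T) {M N : FModF P}
    (ρ : FModFHom M N) : FModFHom (derMod a M) (derMod a N) where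
  app V t x := ρ.app (Fresh a V) t x
  natural f t x := ρ.natural (fshift P a f) t x

/-- Derivation with respect to `u ∈ T`: the derived data `M^u` (object map
`V ↦ M(V^{*u})`, substitution `ς^M` applied to the shifted map) satisfies the
module laws, the family `V ↦ ρ_{V^{*u}}` is a module morphism `M^u → N^u` for
any module morphism `ρ : M → N`, and this assignment is functorial, i.e.
derivation is an endofunctor on `Mod^P_{[T,Set]}`. -/
theorem derivation_is_endofunctor (T : Type u) (P : FMonad T) (a : T) :
    -- the derived data satisfies the module laws
    (∀ (M : FModF P) (V : T → Type u) (t : T) (x : M.obj (Fresh a V) t),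
      M.subst (fshift P a (fun t v => P.eta t v)) t x = x) ∧
    (∀ (M : FModF P) (V W X : T → Type u) (f : ∀ t, V t → P.obj W t)
        (g : ∀ t, W t → P.obj X t) (t : T) (x : M.obj (Fresh a V) t),
      M.subst (fshift P a g) t (M.subst (fshift P a f) t x)
        = M.subst (fshift P a (fun t v => P.subst g t (f t v))) t x) ∧
    -- the derivative of a module morphism is a module morphism
    (∀ (M N : FModF P) (ρ : FModFHom M N),
      ∃ ρ' : FModFHom (derMod a M) (derMod a N),
        ∀ (V : T → Type u) (t : T) (x : M.obj (Fresh a V) t),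
          ρ'.app V t x = ρ.app (Fresh a V) t x) ∧
    -- functoriality: identities and composites are preserved
    (∀ (M : FModF P) (V : T → Type u) (t : T) (x : M.obj (Fresh a V) t),
      (derHom a (FModFHom.id' M)).app V t x = x) ∧
    (∀ (M N L : FModF P) (ρ : FModFHom M N) (τ : FModFHom N L)
        (V : T → Type u) (t : T) (x : M.obj (Fresh a V) t),
      (derHom a (ρ.comp τ)).app V t x
        = (derHom a τ).app V t ((derHom a ρ).app V t x)) := by
  refine ⟨fun M V t x => ?_, fun M V W X f g t x => ?_,
    fun M N ρ => ⟨derHom a ρ, fun _ _ _ => rfl⟩, fun _ _ _ _ => rfl,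
    fun _ _ _ _ _ _ _ _ => rfl⟩
  · exact (derMod a M).subst_eta t x
  · exact (derMod a M).subst_subst f g t x
end

section
/- The simply-typed lambda calculus SLC over the simple types 𝒯, with unit Var and Kleisli substitution subst, is a monad on [𝒯,Set]: for all 𝒯-indexed families V, W, X, all f : ∀ t, V t → SLC W t, g : ∀ t, W t → SLC X t, all t ∈ 𝒯, v ∈ V t and M ∈ SLC V t, one has subst f (Var v) = f t v, subst Var M = M, and subst g (subst f M) = subst (fun t v => subst g (f t v)) M. -/
set_option autoImplicit false

universe u

/-- The simple types: a base type `*` and arrow types `s ⇒ t`. -/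
inductive Ty : Type where
  | base : Ty
  | arr : Ty → Ty → Ty

/-- `FreshT s V` is the family `V` enriched with one fresh element of index
`s`, i.e. `V^{*s}`. -/
inductive FreshT (s : Ty) (V : Ty → Type u) : Ty → Type u where
  | old : ∀ {t : Ty}, V t → FreshT s V t
  | new : FreshT s V s

/-- Simply-typed lambda terms over a family `V` of typed free variables. -/
inductive SLC : (Ty → Type u) → Ty → Type (u + 1) where
  | Var : ∀ {V : Ty → Type u} {t : Ty}, V t → SLC V t
  | Abs : ∀ {V : Ty → Type u} {s t : Ty}, SLC (FreshT s V) t → SLC V (Ty.arr s t)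
  | App : ∀ {V : Ty → Type u} {s t : Ty}, SLC V (Ty.arr s t) → SLC V s → SLC V t

/-- Functoriality of the enrichment `V ↦ V^{*s}`. -/
def freshMap {s : Ty} {V W : Ty → Type u} (g : ∀ t, V t → W t) :
    ∀ t, FreshT s V t → FreshT s W t
  | _, .old v => .old (g _ v)
  | _, .new => .new

/-- Renaming along a family of maps `g : V → W`. -/
def SLC.rename : ∀ {V W : Ty → Type u}, (∀ t, V t → W t) → ∀ t, SLC V t → SLC W t
  | _, _, g, _, .Var v => .Var (g _ v)
  | _, _, g, _, .Abs M => .Abs (SLC.rename (freshMap g) _ M)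
  | _, _, g, _, .App M N => .App (SLC.rename g _ M) (SLC.rename g _ N)

/-- `shift f : V^{*s} → SLC (W^{*s})` sends the fresh variable to `Var` of the
fresh variable and `v ∈ V t` to the renaming of `f v` along the inclusion
`W → W^{*s}`. -/
def SLC.shift {s : Ty} {V W : Ty → Type u} (f : ∀ t, V t → SLC W t) :
    ∀ t, FreshT s V t → SLC (FreshT s W) t
  | _, .old v => SLC.rename (fun _ w => FreshT.old w) _ (f _ v)
  | _, .new => .Var FreshT.new

/-- Capture-avoiding substitution. -/
def SLC.subst : ∀ {V W : Ty → Type u}, (∀ t, V t → SLC W t) → ∀ t, SLC V t → SLC W t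
  | _, _, f, _, .Var v => f _ v
  | _, _, f, _, .Abs M => .Abs (SLC.subst (SLC.shift f) _ M)
  | _, _, f, _, .App M N => .App (SLC.subst f _ M) (SLC.subst f _ N)

theorem freshMap_comp {s : Ty} {V W X : Ty → Type u} (g : ∀ t, W t → X t)
    (f : ∀ t, V t → W t) (t : Ty) (x : FreshT s V t) :
    freshMap g t (freshMap f t x) = freshMap (fun t v => g t (f t v)) t x := by
  cases x <;> rfl

theorem rename_rename {V W X : Ty → Type u} (g : ∀ t, W t → X t) (f : ∀ t, V t → W t)
    (t : Ty) (M : SLC V t) :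
    SLC.rename g t (SLC.rename f t M) = SLC.rename (fun t v => g t (f t v)) t M := by
  induction M generalizing W X with
  | Var v => rfl
  | @Abs V' s t M ih =>
      show SLC.Abs _ = SLC.Abs _
      rw [ih]
      have h : (fun t v => freshMap g t (freshMap f t v))
          = (freshMap (s := s) fun t v => g t (f t v)) := by
        funext t x; exact freshMap_comp g f t x
      rw [h]
  | App M N ihM ihN =>
      show SLC.App _ _ = SLC.App _ _
      rw [ihM, ihN]

theorem subst_rename {V W X : Ty → Type u} (f : ∀ t, W t → SLC X t) (g : ∀ t, V t → W t)
    (t : Ty) (M : SLC V t) :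
    SLC.subst f t (SLC.rename g t M) = SLC.subst (fun t v => f t (g t v)) t M := by
  induction M generalizing W X with
  | Var v => rfl
  | @Abs V' s t M ih =>
      show SLC.Abs _ = SLC.Abs _
      rw [ih]
      have h : (fun t v => SLC.shift f t (freshMap g t v))
          = (SLC.shift (s := s) fun t v => f t (g t v)) := by
        funext t x; cases x <;> rfl
      rw [h]
  | App M N ihM ihN =>
      show SLC.App _ _ = SLC.App _ _
      rw [ihM, ihN]

theorem rename_subst {V W X : Ty → Type u} (g : ∀ t, W t → X t) (f : ∀ t, V t → SLC W t)
    (t : Ty) (M : SLC V t) :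
    SLC.rename g t (SLC.subst f t M) = SLC.subst (fun t v => SLC.rename g t (f t v)) t M := by
  induction M generalizing W X with
  | Var v => rfl
  | @Abs V' s t M ih =>
      show SLC.Abs _ = SLC.Abs _
      rw [ih]
      have h : (fun t v => SLC.rename (freshMap g) t (SLC.shift f t v))
          = (SLC.shift (s := s) fun t v => SLC.rename g t (f t v)) := by
        funext t x
        cases x with
        | new => rfl
        | old v =>
            show SLC.rename (freshMap g) _ (SLC.rename _ _ (f _ v))
              = SLC.rename _ _ (SLC.rename g _ (f _ v))
            rw [rename_rename, rename_rename]
            rfl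
      rw [h]
  | App M N ihM ihN =>
      show SLC.App _ _ = SLC.App _ _
      rw [ihM, ihN]

theorem subst_subst {V W X : Ty → Type u} (g : ∀ t, W t → SLC X t) (f : ∀ t, V t → SLC W t)
    (t : Ty) (M : SLC V t) :
    SLC.subst g t (SLC.subst f t M) = SLC.subst (fun t v => SLC.subst g t (f t v)) t M := by
  induction M generalizing W X with
  | Var v => rfl
  | @Abs V' s t M ih =>
      show SLC.Abs _ = SLC.Abs _
      rw [ih]
      have h : (fun t v => SLC.subst (SLC.shift g) t (SLC.shift f t v))
          = (SLC.shift (s := s) fun t v => SLC.subst g t (f t v)) := by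
        funext t x
        cases x with
        | new => rfl
        | old v =>
            show SLC.subst (SLC.shift g) _ (SLC.rename _ _ (f _ v))
              = SLC.rename _ _ (SLC.subst g _ (f _ v))
            rw [subst_rename, rename_subst]
            rfl
      rw [h]
  | App M N ihM ihN =>
      show SLC.App _ _ = SLC.App _ _
      rw [ihM, ihN]

theorem subst_var {V : Ty → Type u} (t : Ty) (M : SLC V t) :
    SLC.subst (fun t v => SLC.Var v) t M = M := by
  induction M with
  | Var v => rfl
  | @Abs V' s t M ih =>
      show SLC.Abs _ = SLC.Abs _
      have h : (SLC.shift (s := s) (fun t (v : V' t) => SLC.Var v))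
          = fun t v => SLC.Var v := by
        funext t x; cases x <;> rfl
      rw [show SLC.subst (SLC.shift fun t v => SLC.Var v) t M = M from h ▸ ih]
  | App M N ihM ihN =>
      show SLC.App _ _ = SLC.App _ _
      rw [ihM, ihN]

/-- The simply-typed lambda calculus `SLC` over the simple types, with unit
`Var` and Kleisli substitution `subst`, is a monad on `[𝒯,Set]`: for all
families `V`, `W`, `X`, all `f : ∀ t, V t → SLC W t`, `g : ∀ t, W t → SLC X t`,
all `t`, `v ∈ V t` and `M ∈ SLC V t`, one has `subst f (Var v) = f t v`,
`subst Var M = M`, and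
`subst g (subst f M) = subst (fun t v => subst g (f t v)) M`. -/
theorem SLC_is_monad (V W X : Ty → Type u) (f : ∀ t, V t → SLC W t)
    (g : ∀ t, W t → SLC X t) :
    (∀ (t : Ty) (v : V t), SLC.subst f t (SLC.Var v) = f t v) ∧
    (∀ (t : Ty) (M : SLC V t), SLC.subst (fun t v => SLC.Var v) t M = M) ∧
    (∀ (t : Ty) (M : SLC V t),
      SLC.subst g t (SLC.subst f t M)
        = SLC.subst (fun t v => SLC.subst g t (f t v)) t M) := by
  exact ⟨fun t v => rfl, subst_var, subst_subst g f⟩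
end

section
/- For every type T, every T-signature S, and their morphisms, the representations of S form a category: the composite of the underlying monad morphisms of two morphisms of representations is again a morphism of representations, the identity monad morphism is a morphism of representations, and composition (with equality of morphisms given by componentwise equality of the underlying monad morphisms) is associative and unital. -/
set_option autoImplicit false

universe u

/-- `pow l V` is `V` enriched with fresh variables of types according to the list `l`,
written `V ** l`. -/
def pow {T : Type u} (l : List T) (V : T → Type u) : T → Type u :=
  match l with
  | [] => V
  | b :: bs => pow bs (Fresh b V)

/-- Multiple shifting `f^{s⃗}`. -/
def lshift {T : Type u} (P : FMonad T) :
    ∀ (l : List T) {V W : T → Type u},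
      (∀ t, V t → P.obj W t) → ∀ t, pow l V t → P.obj (pow l W) t
  | [], _, _, f => f
  | b :: bs, _, _, f => lshift P bs (fshift P b f)

/-- The carrier of the product module `(M^{s⃗₁})_{t₁} × ⋯ × (M^{s⃗ₙ})_{tₙ}`
associated to the argument list of an arity: a heterogeneous list. -/
inductive Args {T : Type u} (M : (T → Type u) → T → Type u) (V : T → Type u) :
    List (List T × T) → Type u where
  | nil : Args M V []
  | cons : ∀ {b : List T × T} {bs : List (List T × T)},
      M (pow b.1 V) b.2 → Args M V bs → Args M V (b :: bs)

/-- The module substitution of the product module associated to an argument list. -/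
def argSubst {T : Type u} (P : FMonad T) {V W : T → Type u}
    (f : ∀ t, V t → P.obj W t) :
    ∀ {l : List (List T × T)}, Args P.obj V l → Args P.obj W l
  | _, .nil => .nil
  | _, .cons (b := b) x xs => .cons (P.subst (lshift P b.1 f) b.2 x) (argSubst P f xs)

/-- A `T`-signature: a family of `T`-arities, indexed by some type.
An arity is a pair of a list of pairs `(s⃗, t)` and an output type `t₀`. -/
structure Signature (T : Type u) where
  idx : Type u
  ar : idx → List (List T × T) × T

/-- A representation of the signature `S`: a monad on `[T,Set]` together with,
for each arity of `S`, a module morphism from the associated product of derived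
fibre modules to the fibre module over the output type. -/
structure Repres {T : Type u} (S : Signature T) where
  mon : FMonad T
  rep : ∀ (i : S.idx) (V : T → Type u),
    Args mon.obj V (S.ar i).1 → mon.obj V (S.ar i).2
  rep_hom : ∀ (i : S.idx) {V W : T → Type u} (f : ∀ t, V t → mon.obj W t)
      (x : Args mon.obj V (S.ar i).1),
    rep i W (argSubst mon f x) = mon.subst f (S.ar i).2 (rep i V x)

/-- Componentwise application of a monad morphism to an argument list; this is
the product of the derived fibres of the module morphism induced by the monad
morphism. -/
def argApp {T : Type u} {P Q : FMonad T} (h : FMonadHom P Q) {V : T → Type u} :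
    ∀ {l : List (List T × T)}, Args P.obj V l → Args Q.obj V l
  | _, .nil => .nil
  | _, .cons (b := b) x xs => .cons (h.app (pow b.1 V) b.2 x) (argApp h xs)

/-- A morphism of representations: a monad morphism commuting with the
representation module morphisms. -/
structure RepresHom {T : Type u} {S : Signature T} (P Q : Repres S) where
  mh : FMonadHom P.mon Q.mon
  commute : ∀ (i : S.idx) (V : T → Type u) (x : Args P.mon.obj V (S.ar i).1),
    mh.app V (S.ar i).2 (P.rep i V x) = Q.rep i V (argApp mh x)
/-- Identity monad morphism. -/
def FMonadHom.id' {T : Type u} (P : FMonad T) : FMonadHom P P where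
  app _ _ x := x
  app_eta _ _ := rfl
  app_subst _ _ _ := rfl

/-- Composition of monad morphisms. -/
def FMonadHom.comp {T : Type u} {P Q R : FMonad T}
    (f : FMonadHom P Q) (g : FMonadHom Q R) : FMonadHom P R where
  app V t x := g.app V t (f.app V t x)
  app_eta := by
    intro V t v
    show g.app V t (f.app V t (P.eta t v)) = R.eta t v
    rw [f.app_eta, g.app_eta]
  app_subst := by
    intro V W k t x
    show g.app W t (f.app W t (P.subst k t x))
      = R.subst (fun t v => g.app W t (f.app W t (k t v))) t
          (g.app V t (f.app V t x))
    rw [f.app_subst, g.app_subst]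

theorem argApp_id {T : Type u} {P : FMonad T} {V : T → Type u}
    {l : List (List T × T)} (x : Args P.obj V l) :
    argApp (FMonadHom.id' P) x = x := by
  induction x with
  | nil => rfl
  | cons y ys ih =>
    simp only [argApp]
    rw [ih]
    rfl

theorem argApp_comp {T : Type u} {P Q R : FMonad T}
    (f : FMonadHom P Q) (g : FMonadHom Q R) {V : T → Type u}
    {l : List (List T × T)} (x : Args P.obj V l) :
    argApp (f.comp g) x = argApp g (argApp f x) := by
  induction x with
  | nil => rfl
  | cons y ys ih =>
    simp only [argApp]
    rw [ih]
    rfl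

/-- The identity morphism of representations. -/
def RepresHom.id' {T : Type u} {S : Signature T} (P : Repres S) : RepresHom P P where
  mh := FMonadHom.id' P.mon
  commute := by
    intro i V x
    show P.rep i V x = _
    rw [argApp_id]

/-- Composition of morphisms of representations: the composite of the underlying
monad morphisms, which is again a morphism of representations. -/
def RepresHom.comp {T : Type u} {S : Signature T} {P Q R : Repres S}
    (f : RepresHom P Q) (g : RepresHom Q R) : RepresHom P R where
  mh := f.mh.comp g.mh
  commute := by
    intro i V x
    show g.mh.app V _ (f.mh.app V _ (P.rep i V x)) = _
    rw [f.commute, g.commute, argApp_comp]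

/-- The representations of a `T`-signature `S` form a category: composition of
morphisms of representations (defined on the underlying monad morphisms
componentwise) and the identity are again morphisms of representations, and
composition is associative and unital componentwise. -/
theorem representations_form_a_category (T : Type u) (S : Signature T) :
    -- composition is componentwise composition of the underlying monad morphisms
    (∀ (P Q R : Repres S) (f : RepresHom P Q) (g : RepresHom Q R)
        (V : T → Type u) (t : T) (x : P.mon.obj V t),
      (f.comp g).mh.app V t x = g.mh.app V t (f.mh.app V t x)) ∧
    -- the identity is componentwise the identity
    (∀ (P : Repres S) (V : T → Type u) (t : T) (x : P.mon.obj V t),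
      (RepresHom.id' P).mh.app V t x = x) ∧
    -- associativity, componentwise
    (∀ (P Q R R' : Repres S) (f : RepresHom P Q) (g : RepresHom Q R)
        (h : RepresHom R R') (V : T → Type u) (t : T) (x : P.mon.obj V t),
      ((f.comp g).comp h).mh.app V t x = (f.comp (g.comp h)).mh.app V t x) ∧
    -- unitality, componentwise
    (∀ (P Q : Repres S) (f : RepresHom P Q) (V : T → Type u) (t : T)
        (x : P.mon.obj V t),
      ((RepresHom.id' P).comp f).mh.app V t x = f.mh.app V t x ∧
      (f.comp (RepresHom.id' Q)).mh.app V t x = f.mh.app V t x) ∧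
    -- two morphisms of representations with componentwise equal underlying
    -- monad morphisms are equal
    (∀ (P Q : Repres S) (f g : RepresHom P Q),
      (∀ (V : T → Type u) (t : T) (x : P.mon.obj V t),
        f.mh.app V t x = g.mh.app V t x) → f = g) := by
  refine ⟨fun _ _ _ _ _ _ _ _ => rfl, fun _ _ _ _ => rfl,
    fun _ _ _ _ _ _ _ _ _ _ => rfl, fun _ _ _ _ _ _ => ⟨rfl, rfl⟩, ?_⟩
  intro P Q f g h
  obtain ⟨⟨fa, _, _⟩, _⟩ := f
  obtain ⟨⟨ga, _, _⟩, _⟩ := g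
  have : fa = ga := by funext V t x; exact h V t x
  subst this
  rfl
end
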